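/- A coalgebra C is left f-qcF (i.e. every finite dimensional right C-comodule embeds as a left C*-module in a free left C*-module) if and only if every finite dimensional right coideal of C embeds, as a left C*-module, in a free left C*-module. -/

import Mathlib

open TensorProduct

noncomputable section
namespace Paper

variable (k : Type) [Field k]
variable (C : Type) [AddCommGroup C] [Module k C] [Coalgebra k C]

/-- The convolution product on the dual algebra `C*`. -/
def conv (f g : Module.Dual k C) : Module.Dual k C :=
  (TensorProduct.lid k k).toLinearMap ∘ₗ TensorProduct.map f g ∘ₗ Coalgebra.comul

variable {M : Type} [AddCommGroup M] [Module k M]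

/-- The left `C*`-action `f ⇀ m = ∑ m₀ f(m₁)` on a right `C`-comodule `(M, ρ)`. -/
def dualAct (ρ : M →ₗ[k] M ⊗[k] C) (f : Module.Dual k C) : M →ₗ[k] M :=
  (TensorProduct.rid k M).toLinearMap ∘ₗ TensorProduct.map LinearMap.id f ∘ₗ ρ

/-- `ρ : M → M ⊗ C` is a right `C`-comodule structure. -/
structure IsRightComodule (ρ : M →ₗ[k] M ⊗[k] C) : Prop where
  coassoc : (TensorProduct.assoc k M C C).toLinearMap ∘ₗ (TensorProduct.map ρ LinearMap.id) ∘ₗ ρ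
      = (TensorProduct.map LinearMap.id Coalgebra.comul) ∘ₗ ρ
  counit : (TensorProduct.rid k M).toLinearMap
      ∘ₗ (TensorProduct.map LinearMap.id Coalgebra.counit) ∘ₗ ρ = LinearMap.id

/-- The right `C`-comodule `(M, ρ)` embeds, as a left `C*`-module, in a free left `C*`-module. -/
def EmbedsInFree (ρ : M →ₗ[k] M ⊗[k] C) : Prop :=
  ∃ (I : Type) (Φ : M →ₗ[k] (I →₀ Module.Dual k C)), Function.Injective Φ ∧
    ∀ (f : Module.Dual k C) (m : M) (i : I),
      Φ (dualAct k C ρ f m) i = conv k C f (Φ m i)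

/-- `C` is left quasi-coFrobenius. -/
def LeftQcF : Prop := EmbedsInFree k C (Coalgebra.comul : C →ₗ[k] C ⊗[k] C)

/-- `C` is left f-qcF : every finite dimensional right `C`-comodule embeds, as a left
`C*`-module, in a free left `C*`-module. -/
def LeftfQcF : Prop :=
  ∀ (M : Type) [AddCommGroup M] [Module k M] (ρ : M →ₗ[k] M ⊗[k] C),
    IsRightComodule k C ρ → FiniteDimensional k M → EmbedsInFree k C ρ

/-- `lam : M → C ⊗ M` is a left `C`-comodule structure. -/
structure IsLeftComodule (lam : M →ₗ[k] C ⊗[k] M) : Prop where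
  coassoc : (TensorProduct.map LinearMap.id lam) ∘ₗ lam
      = (TensorProduct.assoc k C C M).toLinearMap
          ∘ₗ (TensorProduct.map Coalgebra.comul LinearMap.id) ∘ₗ lam
  counit : (TensorProduct.lid k M).toLinearMap
      ∘ₗ (TensorProduct.map Coalgebra.counit LinearMap.id) ∘ₗ lam = LinearMap.id

/-- The left coaction on the free left comodule `C^(I)`. -/
def freeCoaction (I : Type) : (I →₀ C) →ₗ[k] C ⊗[k] (I →₀ C) :=
  Finsupp.lsum k fun i =>
    (TensorProduct.map LinearMap.id (Finsupp.lsingle i)) ∘ₗ Coalgebra.comul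

/-- `C` is a generator of the category of its left comodules: every left `C`-comodule is an
epimorphic image of a coproduct `C^(I)` of copies of `C`. -/
def IsGeneratorLeftComodules : Prop :=
  ∀ (X : Type) [AddCommGroup X] [Module k X] (lamX : X →ₗ[k] C ⊗[k] X),
    IsLeftComodule k C lamX →
    ∃ (I : Type) (φ : (I →₀ C) →ₗ[k] X), Function.Surjective φ ∧
      (TensorProduct.map LinearMap.id φ) ∘ₗ freeCoaction k C I = lamX ∘ₗ φ

/-- A submodule `N` of a right comodule `(M, ρ)` is a subcomodule if `ρ(N) ⊆ N ⊗ C`. -/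
def IsSubcomodule (ρ : M →ₗ[k] M ⊗[k] C) (N : Submodule k M) : Prop :=
  ∀ n ∈ N, ρ n ∈ LinearMap.range (TensorProduct.map N.subtype (LinearMap.id (M := C)))

/-- A right comodule is simple if it is nonzero and has no proper nonzero subcomodules. -/
def IsSimpleComodule (ρ : M →ₗ[k] M ⊗[k] C) : Prop :=
  Nontrivial M ∧ ∀ N : Submodule k M, IsSubcomodule k C ρ N → N = ⊥ ∨ N = ⊤

/-- A morphism of right `C`-comodules. -/
def IsComodHom {N : Type} [AddCommGroup N] [Module k N]
    (ρM : M →ₗ[k] M ⊗[k] C) (ρN : N →ₗ[k] N ⊗[k] C) (φ : M →ₗ[k] N) : Prop :=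
  (TensorProduct.map φ LinearMap.id) ∘ₗ ρM = ρN ∘ₗ φ

/-- `(E, ρE)` is an injective object in the category of right `C`-comodules. -/
def IsInjectiveComodule {E : Type} [AddCommGroup E] [Module k E]
    (ρE : E →ₗ[k] E ⊗[k] C) : Prop :=
  ∀ (X Y : Type) [AddCommGroup X] [Module k X] [AddCommGroup Y] [Module k Y]
    (ρX : X →ₗ[k] X ⊗[k] C) (ρY : Y →ₗ[k] Y ⊗[k] C),
    IsRightComodule k C ρX → IsRightComodule k C ρY →
    ∀ g : X →ₗ[k] Y, IsComodHom k C ρX ρY g → Function.Injective g →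
    ∀ f : X →ₗ[k] E, IsComodHom k C ρX ρE f →
      ∃ h : Y →ₗ[k] E, IsComodHom k C ρY ρE h ∧ h ∘ₗ g = f

/-- `ι : M → E` exhibits `(E, ρE)` as an injective envelope of the right comodule `(M, ρM)`. -/
def IsInjectiveEnvelope {E : Type} [AddCommGroup E] [Module k E]
    (ρM : M →ₗ[k] M ⊗[k] C) (ρE : E →ₗ[k] E ⊗[k] C) (ι : M →ₗ[k] E) : Prop :=
  IsComodHom k C ρM ρE ι ∧ Function.Injective ι ∧ IsInjectiveComodule k C ρE ∧
    ∀ N : Submodule k E, IsSubcomodule k C ρE N → N ≠ ⊥ → LinearMap.range ι ⊓ N ≠ ⊥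

/-- `C` is left semiperfect: the injective envelope of every simple right `C`-comodule is
finite dimensional. -/
def LeftSemiperfect : Prop :=
  ∀ (M : Type) [AddCommGroup M] [Module k M] (ρM : M →ₗ[k] M ⊗[k] C),
    IsRightComodule k C ρM → IsSimpleComodule k C ρM →
    ∃ (E : Type) (_ : AddCommGroup E) (_ : Module k E)
      (ρE : E →ₗ[k] E ⊗[k] C) (ι : M →ₗ[k] E),
      IsRightComodule k C ρE ∧ IsInjectiveEnvelope k C ρM ρE ι ∧ FiniteDimensional k E

/-- A right coideal of `C`: a subspace `N` with `Δ(N) ⊆ N ⊗ C`. -/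
def IsRightCoideal (N : Submodule k C) : Prop :=
  ∀ x ∈ N, Coalgebra.comul (R := k) x ∈
    LinearMap.range (TensorProduct.map N.subtype (LinearMap.id (M := C)))

/-- The right coideal `N ⊆ C` embeds, as a left `C*`-module, in a free left `C*`-module. -/
def CoidealEmbedsInFree (N : Submodule k C) : Prop :=
  ∃ (J : Type) (Φ : N →ₗ[k] (J →₀ Module.Dual k C)), Function.Injective Φ ∧
    ∀ (f : Module.Dual k C) (x : C) (hx : x ∈ N)
      (hfx : dualAct k C (Coalgebra.comul (R := k)) f x ∈ N) (j : J),
      Φ ⟨dualAct k C (Coalgebra.comul (R := k)) f x, hfx⟩ j = conv k C f (Φ ⟨x, hx⟩ j)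

end Paper

/-! For a finite dimensional right comodule `M` with basis `(bᵢ)`, the coefficient maps
`m ↦ ∑ bᵢ*(m₀) m₁` are comodule maps `M → C`. Their images are therefore finite dimensional
right coideals, and by the counit axiom `ε (∑ bᵢ*(m₀) m₁) = bᵢ*(m)` they jointly separate the
points of `M`, so embeddings of these coideals into free `C*`-modules assemble into one of `M`.
Conversely, a right coideal is a subcomodule of `C`: since tensoring over a field preserves
injectivity, `Δ` restricts to a coaction on it. -/

namespace Paper

variable {k : Type} [Field k] {C : Type} [AddCommGroup C] [Module k C]
variable {M : Type} [AddCommGroup M] [Module k M] {X : Type} [AddCommGroup X] [Module k X]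

theorem IsComodHom.map_dualAct {ρM : M →ₗ[k] M ⊗[k] C} {ρX : X →ₗ[k] X ⊗[k] C}
    {φ : M →ₗ[k] X} (hφ : IsComodHom k C ρM ρX φ) (f : Module.Dual k C) (m : M) :
    φ (dualAct k C ρM f m) = dualAct k C ρX f (φ m) := by
  have hnat : φ ∘ₗ (TensorProduct.rid k M).toLinearMap ∘ₗ TensorProduct.map LinearMap.id f
      = (TensorProduct.rid k X).toLinearMap ∘ₗ TensorProduct.map LinearMap.id f ∘ₗ
          TensorProduct.map φ LinearMap.id := by
    ext x c
    simp
  simp only [dualAct, LinearMap.comp_apply]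
  rw [← LinearMap.comp_apply ρX φ, ← hφ]
  exact LinearMap.congr_fun hnat (ρM m)

variable [Coalgebra k C]

theorem isRightComodule_comul : IsRightComodule k C (Coalgebra.comul (R := k) (A := C)) where
  coassoc := Coalgebra.coassoc
  counit := by
    ext c
    exact (congrArg (TensorProduct.rid k C) (Coalgebra.lTensor_counit_comul (R := k) c)).trans
      (by simp)

theorem IsRightComodule.of_injective {ρM : M →ₗ[k] M ⊗[k] C} {ρX : X →ₗ[k] X ⊗[k] C}
    {φ : M →ₗ[k] X} (hφ : IsComodHom k C ρM ρX φ) (hinj : Function.Injective φ)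
    (hρX : IsRightComodule k C ρX) : IsRightComodule k C ρM where
  coassoc := by
    have hinj' : Function.Injective (TensorProduct.map φ (LinearMap.id (M := C ⊗[k] C))) :=
      Module.Flat.rTensor_preserves_injective_linearMap φ hinj
    have hφm (m : M) : map φ LinearMap.id (ρM m) = ρX (φ m) := LinearMap.congr_fun hφ m
    have nat_assoc (u : (M ⊗[k] C) ⊗[k] C) :
        map φ LinearMap.id (TensorProduct.assoc k M C C u)
          = TensorProduct.assoc k X C C (map (map φ LinearMap.id) LinearMap.id u) := by
      simpa using map_map_assoc φ (LinearMap.id (M := C)) (LinearMap.id (M := C)) u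
    have nat_coaction (t : M ⊗[k] C) :
        map (map φ LinearMap.id) LinearMap.id (map ρM LinearMap.id t)
          = map ρX LinearMap.id (map φ LinearMap.id t) := by
      rw [← LinearMap.comp_apply, ← LinearMap.comp_apply (map ρX _), ← map_comp, ← map_comp,
        hφ]
    have nat_comul (t : M ⊗[k] C) : map φ LinearMap.id (map LinearMap.id Coalgebra.comul t)
        = map LinearMap.id Coalgebra.comul (map φ LinearMap.id t) := by
      rw [← LinearMap.comp_apply, ← LinearMap.comp_apply (map _ _), ← map_comp, ← map_comp]
      simp
    refine LinearMap.ext fun m => hinj' ?_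
    simp only [LinearMap.comp_apply, LinearEquiv.coe_coe]
    rw [nat_assoc, nat_coaction, hφm, nat_comul, hφm]
    exact LinearMap.congr_fun hρX.coassoc (φ m)
  counit := LinearMap.ext fun m =>
    hinj ((hφ.map_dualAct Coalgebra.counit m).trans (LinearMap.congr_fun hρX.counit (φ m)))

theorem IsRightCoideal.exists_coaction {N : Submodule k C} (hN : IsRightCoideal k C N) :
    ∃ ρN : N →ₗ[k] N ⊗[k] C,
      IsRightComodule k C ρN ∧ IsComodHom k C ρN Coalgebra.comul N.subtype := by
  have he : Function.Injective (TensorProduct.map N.subtype (LinearMap.id (M := C))) :=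
    Module.Flat.rTensor_preserves_injective_linearMap N.subtype N.injective_subtype
  let E := LinearEquiv.ofInjective _ he
  let ρN : N →ₗ[k] N ⊗[k] C := E.symm.toLinearMap ∘ₗ
    LinearMap.codRestrict _ (Coalgebra.comul ∘ₗ N.subtype) fun n => hN n n.2
  have hρN : IsComodHom k C ρN Coalgebra.comul N.subtype := by
    ext n
    exact congrArg Subtype.val (E.apply_symm_apply _)
  exact ⟨ρN, IsRightComodule.of_injective hρN N.injective_subtype isRightComodule_comul, hρN⟩

theorem coidealEmbedsInFree_of_embedsInFree {N : Submodule k C} {ρN : N →ₗ[k] N ⊗[k] C}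
    (hρN : IsComodHom k C ρN Coalgebra.comul N.subtype) (h : EmbedsInFree k C ρN) :
    CoidealEmbedsInFree k C N := by
  obtain ⟨J, Φ, hinj, hΦ⟩ := h
  refine ⟨J, Φ, hinj, fun f x hx hfx j => ?_⟩
  have hact : (⟨dualAct k C Coalgebra.comul f x, hfx⟩ : N) = dualAct k C ρN f ⟨x, hx⟩ :=
    Subtype.ext (hρN.map_dualAct f ⟨x, hx⟩).symm
  rw [hact, hΦ]

def coeffMap (ρ : M →ₗ[k] M ⊗[k] C) (g : Module.Dual k M) : M →ₗ[k] C :=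
  (TensorProduct.lid k C).toLinearMap ∘ₗ TensorProduct.map g LinearMap.id ∘ₗ ρ

section CoeffMap

variable {ρ : M →ₗ[k] M ⊗[k] C} (hρ : IsRightComodule k C ρ) (g : Module.Dual k M)
include hρ

theorem isComodHom_coeffMap : IsComodHom k C ρ Coalgebra.comul (coeffMap ρ g) := by
  have h_comul (t : M ⊗[k] C) : Coalgebra.comul (TensorProduct.lid k C (map g LinearMap.id t))
      = TensorProduct.lid k (C ⊗[k] C)
          (map g LinearMap.id (map LinearMap.id Coalgebra.comul t)) := by
    induction t using TensorProduct.induction_on with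
    | zero => simp
    | tmul x c => simp
    | add t t' ht ht' => simp only [map_add, ht, ht']
  have h_assoc (u : (M ⊗[k] C) ⊗[k] C) :
      TensorProduct.lid k (C ⊗[k] C) (map g LinearMap.id (TensorProduct.assoc k M C C u))
        = map ((TensorProduct.lid k C).toLinearMap ∘ₗ map g LinearMap.id) LinearMap.id u := by
    induction u using TensorProduct.induction_on with
    | zero => simp
    | tmul t c =>
      induction t using TensorProduct.induction_on with
      | zero => simp
      | tmul x d => simp [TensorProduct.smul_tmul']
      | add t t' ht ht' => simp only [add_tmul, map_add, ht, ht']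
    | add u u' hu hu' => simp only [map_add, hu, hu']
  ext m
  simp only [coeffMap, LinearMap.comp_apply, LinearEquiv.coe_coe]
  rw [h_comul, ← LinearMap.comp_apply (map LinearMap.id _), ← hρ.coassoc]
  simp only [LinearMap.comp_apply, LinearEquiv.coe_coe]
  rw [h_assoc, TensorProduct.map_map]
  rfl

theorem counit_coeffMap (m : M) : Coalgebra.counit (coeffMap ρ g m) = g m := by
  have h (t : M ⊗[k] C) : Coalgebra.counit (TensorProduct.lid k C (map g LinearMap.id t))
      = g (TensorProduct.rid k M (map LinearMap.id Coalgebra.counit t)) := by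
    induction t using TensorProduct.induction_on with
    | zero => simp
    | tmul x c => simp [mul_comm]
    | add t t' ht ht' => simp only [map_add, ht, ht']
  exact (h (ρ m)).trans (congrArg g (LinearMap.congr_fun hρ.counit m))

theorem iInf_ker_coeffMap_coord {ι : Type*} (b : Module.Basis ι k M) :
    ⨅ i, LinearMap.ker (coeffMap ρ (b.coord i)) = ⊥ := by
  refine eq_bot_iff.mpr fun m hm => ?_
  rw [Submodule.mem_iInf] at hm
  rw [Submodule.mem_bot, ← b.forall_coord_eq_zero_iff]
  intro i
  rw [← counit_coeffMap hρ, LinearMap.mem_ker.mp (hm i), map_zero]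

end CoeffMap

section RangeOfComodHom

variable {ρ : M →ₗ[k] M ⊗[k] C} {φ : M →ₗ[k] C} (hφ : IsComodHom k C ρ Coalgebra.comul φ)
include hφ

theorem isRightCoideal_range : IsRightCoideal k C (LinearMap.range φ) := by
  rintro _ ⟨m, rfl⟩
  refine ⟨map φ.rangeRestrict LinearMap.id (ρ m), ?_⟩
  rw [TensorProduct.map_map]
  exact LinearMap.congr_fun hφ m

theorem exists_ker_eq_of_coidealEmbedsInFree_range
    (h : CoidealEmbedsInFree k C (LinearMap.range φ)) :
    ∃ (J : Type) (ψ : M →ₗ[k] (J →₀ Module.Dual k C)), LinearMap.ker ψ = LinearMap.ker φ ∧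
      ∀ (f : Module.Dual k C) (m : M) (j : J),
        ψ (dualAct k C ρ f m) j = conv k C f (ψ m j) := by
  obtain ⟨J, Φ, hinj, hΦ⟩ := h
  refine ⟨J, Φ ∘ₗ φ.rangeRestrict, ?_, fun f m j => ?_⟩
  · rw [LinearMap.ker_comp_of_ker_eq_bot _ (LinearMap.ker_eq_bot_of_injective hinj),
      LinearMap.ker_rangeRestrict]
  · have hact : φ (dualAct k C ρ f m) = dualAct k C Coalgebra.comul f (φ m) :=
      hφ.map_dualAct f m
    have hmem : dualAct k C Coalgebra.comul f (φ m) ∈ LinearMap.range φ := hact ▸ ⟨_, rfl⟩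
    have hrestrict : φ.rangeRestrict (dualAct k C ρ f m) = ⟨_, hmem⟩ := Subtype.ext hact
    exact (congrArg (Φ · j) hrestrict).trans (hΦ f (φ m) ⟨m, rfl⟩ hmem j)

end RangeOfComodHom

theorem embedsInFree_of_iInf_ker_eq_bot {ρ : M →ₗ[k] M ⊗[k] C} {ι : Type} [Fintype ι]
    {J : ι → Type} (ψ : ∀ i, M →ₗ[k] (J i →₀ Module.Dual k C))
    (hψ : ∀ i f m j, ψ i (dualAct k C ρ f m) j = conv k C f (ψ i m j))
    (hker : ⨅ i, LinearMap.ker (ψ i) = ⊥) : EmbedsInFree k C ρ := by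
  let e := (Finsupp.sigmaFinsuppLEquivPiFinsupp k (M := Module.Dual k C) (ιs := J)).symm
  refine ⟨Σ i, J i, e.toLinearMap ∘ₗ LinearMap.pi ψ, ?_, fun f m ⟨i, j⟩ => ?_⟩
  · exact e.injective.comp ((injective_iff_map_eq_zero _).mpr
      (LinearMap.ker_eq_bot'.mp ((LinearMap.ker_pi ψ).trans hker)))
  · simpa [e] using hψ i f m j

end Paper

/-- `C` is left f-qcF iff every finite dimensional right coideal of `C`
embeds, as a left `C*`-module, in a free left `C*`-module. -/
theorem stmt5 (k : Type) [Field k] (C : Type) [AddCommGroup C] [Module k C] [Coalgebra k C] :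
    Paper.LeftfQcF k C ↔
      ∀ N : Submodule k C, Paper.IsRightCoideal k C N → FiniteDimensional k N →
        Paper.CoidealEmbedsInFree k C N := by
  open Paper in
  constructor
  · intro h N hN _
    obtain ⟨ρN, hρN, hsub⟩ := hN.exists_coaction
    exact coidealEmbedsInFree_of_embedsInFree hsub (h N ρN hρN inferInstance)
  · intro h M _ _ ρ hρ _
    let b := Module.finBasis k M
    have hθ i := isComodHom_coeffMap hρ (b.coord i)
    choose J ψ hker hψ using fun i =>
      exists_ker_eq_of_coidealEmbedsInFree_range (hθ i)
        (h _ (isRightCoideal_range (hθ i)) inferInstance)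
    refine embedsInFree_of_iInf_ker_eq_bot ψ hψ ?_
    simpa only [hker] using iInf_ker_coeffMap_coord hρ b
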